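/- arXiv:2410.15426 — 2 statements merged into one kernel-verified Lean document; each statement's English description precedes it below -/
import Mathlib

section
/- Let P̃ be a polyhedron and K a polyhedral cone. Then every vertex of the Minkowski sum P̃ ⊙ K is a vertex of P̃; moreover a vertex u of P̃ is a vertex of P̃ ⊙ K if and only if the intersection of the dual cone K* with the (inner) normal cone N_{P̃}(u) is full-dimensional. -/
open scoped Pointwise RealInnerProductSpace

noncomputable section

abbrev Euc (n : ℕ) := EuclideanSpace ℝ (Fin n)

def omegaFun {n : ℕ} (ω : Fin n → ℝ) (x : Euc n) : ℝ := ∑ i, ω i * x i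

def IsRatPolyhedron {n : ℕ} (P : Set (Euc n)) : Prop :=
  ∃ s : Finset ((Fin n → ℚ) × ℚ),
    P = {x : Euc n | ∀ p ∈ s, (∑ i, (p.1 i : ℝ) * x i) ≤ (p.2 : ℝ)}

def OmegaPositive {n : ℕ} (ω : Fin n → ℝ) (P : Set (Euc n)) : Prop :=
  BddBelow (omegaFun ω '' P)

def IsVertex {n : ℕ} (P : Set (Euc n)) (v : Euc n) : Prop :=
  v ∈ P ∧ ∃ ℓ : Euc n, ∀ x ∈ P, ⟪ℓ, v⟫ ≤ ⟪ℓ, x⟫ ∧ (⟪ℓ, x⟫ = ⟪ℓ, v⟫ → x = v)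

def normalCone {n : ℕ} (P : Set (Euc n)) (v : Euc n) : Set (Euc n) :=
  {ℓ | ∀ x ∈ P, ⟪ℓ, v⟫ ≤ ⟪ℓ, x⟫}

def dualCone {n : ℕ} (C : Set (Euc n)) : Set (Euc n) := {x | ∀ ℓ ∈ C, 0 ≤ ⟪ℓ, x⟫}

def mpow {n : ℕ} (P : Set (Euc n)) : ℕ → Set (Euc n)
  | 0 => {0}
  | k + 1 => P + mpow P k

def polyEval {n : ℕ} (S : Finset ℕ) (Q : ℕ → Set (Euc n)) (P : Set (Euc n)) : Set (Euc n) :=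
  closure (convexHull ℝ (⋃ i ∈ S, Q i + mpow P i))

def IsRoot {n : ℕ} (S : Finset ℕ) (Q : ℕ → Set (Euc n)) (P : Set (Euc n)) : Prop :=
  ∀ w, IsVertex (polyEval S Q P) w →
    ∃ i ∈ S, ∃ j ∈ S, i ≠ j ∧ IsVertex (Q i + mpow P i) w ∧ IsVertex (Q j + mpow P j) w

/-- A (real) polyhedron: a finite intersection of closed half-spaces. -/
def IsPolyhedron {n : ℕ} (P : Set (Euc n)) : Prop :=
  ∃ s : Finset (Euc n × ℝ), P = {x | ∀ p ∈ s, ⟪p.1, x⟫ ≤ p.2}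

def IsPolyhedralCone {n : ℕ} (C : Set (Euc n)) : Prop :=
  IsPolyhedron C ∧ 0 ∈ C ∧ ∀ x ∈ C, ∀ c : ℝ, 0 ≤ c → c • x ∈ C

lemma isClosed_poly {n : ℕ} (s : Finset (Euc n × ℝ)) :
    IsClosed {x : Euc n | ∀ p ∈ s, ⟪p.1, x⟫ ≤ p.2} := by
  have h : {x : Euc n | ∀ p ∈ s, ⟪p.1, x⟫ ≤ p.2} = ⋂ p ∈ s, {x : Euc n | ⟪p.1, x⟫ ≤ p.2} := by
    ext x; simp
  rw [h]
  exact isClosed_biInter fun p _ =>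
    isClosed_le (Continuous.inner continuous_const continuous_id) continuous_const

lemma eps_lemma {n : ℕ} {S : Set (Euc n)} (hcl : IsClosed S)
    (hcone : ∀ x ∈ S, ∀ c : ℝ, 0 ≤ c → c • x ∈ S) {ℓ : Euc n}
    (hpos : ∀ x ∈ S, x ≠ 0 → 0 < ⟪ℓ, x⟫) :
    ∃ ε > 0, ∀ x ∈ S, ε * ‖x‖ ≤ ⟪ℓ, x⟫ := by
  set S₁ := S ∩ Metric.sphere (0 : Euc n) 1 with hS₁
  have hcomp : IsCompact S₁ := (isCompact_sphere (0:Euc n) 1).inter_left hcl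
  have key : ∀ x ∈ S, x ≠ 0 → ‖x‖⁻¹ • x ∈ S₁ := by
    intro x hx hx0
    refine ⟨hcone x hx _ (by positivity), ?_⟩
    simp [norm_smul, norm_ne_zero_iff.2 hx0, inv_mul_cancel₀ (norm_ne_zero_iff.2 hx0)]
  rcases S₁.eq_empty_or_nonempty with he | hne
  · refine ⟨1, one_pos, fun x hx => ?_⟩
    by_cases hx0 : x = 0
    · simp [hx0]
    · exact absurd (key x hx hx0) (by simp [he])
  · obtain ⟨x₀, hx₀, hmin⟩ := hcomp.exists_isMinOn hne
      (((continuous_const.inner continuous_id).continuousOn) :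
        ContinuousOn (fun x : Euc n => ⟪ℓ, x⟫) S₁)
    have hx₀S : x₀ ∈ S := hx₀.1
    have hx₀n : ‖x₀‖ = 1 := by simpa using hx₀.2
    have hε : 0 < ⟪ℓ, x₀⟫ := hpos x₀ hx₀S (by intro h; simp [h] at hx₀n)
    refine ⟨⟪ℓ, x₀⟫, hε, fun x hx => ?_⟩
    by_cases hx0 : x = 0
    · simp [hx0]
    · have h1' := hmin (key x hx hx0)
      have h2 : ⟪ℓ, ‖x‖⁻¹ • x⟫ = ‖x‖⁻¹ * ⟪ℓ, x⟫ := real_inner_smul_right _ _ _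
      have hxn : (0:ℝ) < ‖x‖ := norm_pos_iff.2 hx0
      have h1 : ⟪ℓ, x₀⟫ ≤ ⟪ℓ, ‖x‖⁻¹ • x⟫ := h1'
      rw [h2] at h1
      calc ⟪ℓ, x₀⟫ * ‖x‖ ≤ (‖x‖⁻¹ * ⟪ℓ, x⟫) * ‖x‖ := by
            exact mul_le_mul_of_nonneg_right h1 hxn.le
        _ = ⟪ℓ, x⟫ := by field_simp

lemma kill_lemma {n : ℕ} {ℓ₀ w : Euc n} {ε : ℝ} (hε : 0 < ε)
    (h0 : ⟪ℓ₀, w⟫ = 0) (hb : ∀ ℓ' ∈ Metric.ball ℓ₀ ε, 0 ≤ ⟪ℓ', w⟫) : w = 0 := by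
  by_contra hw
  have hwn : (0:ℝ) < ‖w‖ := norm_pos_iff.2 hw
  set c : ℝ := ε / (2 * ‖w‖) with hc
  have hcpos : 0 < c := by positivity
  have hmem : ℓ₀ - c • w ∈ Metric.ball ℓ₀ ε := by
    rw [Metric.mem_ball, dist_eq_norm]
    have h : ℓ₀ - c • w - ℓ₀ = -(c • w) := by abel
    rw [h, norm_neg, norm_smul, Real.norm_eq_abs, abs_of_pos hcpos]
    have hce : c * ‖w‖ = ε / 2 := by
      rw [hc]; field_simp
    rw [hce]; linarith
  have h2 := hb _ hmem
  have h3 : ⟪ℓ₀ - c • w, w⟫ = ⟪ℓ₀, w⟫ - c * ⟪w, w⟫ := by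
    rw [inner_sub_left, real_inner_smul_left]
  rw [h3, h0, real_inner_self_eq_norm_sq] at h2
  nlinarith [mul_pos hcpos (pow_pos hwn 2)]

/-- every vertex of P̃ ⊙ K is a vertex of P̃; and a vertex u of P̃
is a vertex of P̃ ⊙ K iff K* ∩ N_{P̃}(u) is full-dimensional. -/
theorem stmt_6 {n : ℕ} (P K : Set (Euc n))
    (hP : IsPolyhedron P) (hK : IsPolyhedralCone K) :
    (∀ v, IsVertex (P + K) v → IsVertex P v) ∧
    (∀ u, IsVertex P u →
      (IsVertex (P + K) u ↔ (interior (dualCone K ∩ normalCone P u)).Nonempty)) := by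
  obtain ⟨s, hs⟩ := hP
  obtain ⟨⟨tK, htK⟩, hK0, hKcone⟩ := hK
  have hPsub : P ⊆ P + K := fun x hx => ⟨x, hx, 0, hK0, add_zero x⟩
  have partA : ∀ v, IsVertex (P + K) v → IsVertex P v := by
    rintro v ⟨hvQ, ℓ, hℓ⟩
    obtain ⟨p, hp, k, hk, hpk⟩ := hvQ
    have hpQ : p ∈ P + K := hPsub hp
    have h2k : p + (2:ℝ) • k ∈ P + K := ⟨p, hp, (2:ℝ) • k, hKcone k hk 2 (by norm_num), rfl⟩
    have e1 := (hℓ p hpQ).1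
    have e2 := (hℓ _ h2k).1
    have hv : ⟪ℓ, v⟫ = ⟪ℓ, p⟫ + ⟪ℓ, k⟫ := by rw [← hpk, inner_add_right]
    have h2ke : ⟪ℓ, p + (2:ℝ) • k⟫ = ⟪ℓ, p⟫ + 2 * ⟪ℓ, k⟫ := by
      rw [inner_add_right, real_inner_smul_right]
    rw [h2ke] at e2
    have heq : ⟪ℓ, p⟫ = ⟪ℓ, v⟫ := by linarith
    have hpv : p = v := (hℓ p hpQ).2 heq
    subst hpv
    exact ⟨hp, ℓ, fun x hx => hℓ x (hPsub hx)⟩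
  refine ⟨partA, fun u hu => ⟨?_, ?_⟩⟩
  · -- forward direction
    rintro ⟨huQ, ℓ, hℓ⟩
    have huP : u ∈ P := hu.1
    have huPs : ∀ p ∈ s, ⟪p.1, u⟫ ≤ p.2 := by rw [hs] at huP; exact huP
    set T : Set (Euc n) := {d | ∀ p ∈ s, ⟪p.1, u⟫ = p.2 → ⟪p.1, d⟫ ≤ 0} with hTdef
    have hTclosed : IsClosed T := by
      have h : T = ⋂ p ∈ s, {d : Euc n | ⟪p.1, u⟫ = p.2 → ⟪p.1, d⟫ ≤ 0} := by
        ext d; simp [hTdef]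
      rw [h]
      refine isClosed_biInter fun p _ => ?_
      by_cases hact : ⟪p.1, u⟫ = p.2
      · have h2 : {d : Euc n | ⟪p.1, u⟫ = p.2 → ⟪p.1, d⟫ ≤ 0} = {d | ⟪p.1, d⟫ ≤ 0} := by
          ext d; simp [hact]
        rw [h2]
        exact isClosed_le (continuous_const.inner continuous_id) continuous_const
      · have h2 : {d : Euc n | ⟪p.1, u⟫ = p.2 → ⟪p.1, d⟫ ≤ 0} = Set.univ := by
          ext d
          simp only [Set.mem_setOf_eq, Set.mem_univ, iff_true]
          exact fun h => absurd h hact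
        rw [h2]; exact isClosed_univ
    have hTcone : ∀ d ∈ T, ∀ c : ℝ, 0 ≤ c → c • d ∈ T := by
      intro d hd c hc p hp hact
      rw [real_inner_smul_right]
      nlinarith [hd p hp hact]
    have hTfeas : ∀ d ∈ T, ∃ tt > (0:ℝ), u + tt • d ∈ P := by
      intro d hd
      have hev : ∀ p ∈ s, ∀ᶠ tt in nhdsWithin (0:ℝ) (Set.Ioi 0),
          ⟪p.1, u⟫ + tt * ⟪p.1, d⟫ ≤ p.2 := by
        intro p hp
        by_cases hact : ⟪p.1, u⟫ = p.2
        · have hd0 := hd p hp hact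
          filter_upwards [self_mem_nhdsWithin] with tt htt
          have hmp : tt * ⟪p.1, d⟫ ≤ 0 := mul_nonpos_iff.2 (Or.inl ⟨le_of_lt htt, hd0⟩)
          linarith
        · have hlt : ⟪p.1, u⟫ < p.2 := lt_of_le_of_ne (huPs p hp) hact
          have hc : Filter.Tendsto (fun tt : ℝ => ⟪p.1, u⟫ + tt * ⟪p.1, d⟫)
              (nhdsWithin (0:ℝ) (Set.Ioi 0)) (nhds (⟪p.1, u⟫ + 0 * ⟪p.1, d⟫)) :=
            ((continuous_const.add (continuous_id.mul continuous_const)).tendsto 0).mono_left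
              nhdsWithin_le_nhds
          have hlt' : ⟪p.1, u⟫ + 0 * ⟪p.1, d⟫ < p.2 := by simpa using hlt
          filter_upwards [hc.eventually_lt_const hlt'] with tt htt using le_of_lt htt
      have hall : ∀ᶠ tt in nhdsWithin (0:ℝ) (Set.Ioi 0),
          ∀ p ∈ s, ⟪p.1, u⟫ + tt * ⟪p.1, d⟫ ≤ p.2 :=
        (Filter.eventually_all_finset s).2 hev
      obtain ⟨tt, h1, h2⟩ := (hall.and self_mem_nhdsWithin).exists
      refine ⟨tt, h2, ?_⟩
      rw [hs]
      intro p hp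
      have h3 := h1 p hp
      rw [inner_add_right, real_inner_smul_right]
      exact h3
    have hTpos : ∀ d ∈ T, d ≠ 0 → 0 < ⟪ℓ, d⟫ := by
      intro d hd hd0
      obtain ⟨tt, httpos, hmem⟩ := hTfeas d hd
      have hmemQ : u + tt • d ∈ P + K := hPsub hmem
      have h1 := (hℓ _ hmemQ).1
      have he : ⟪ℓ, u + tt • d⟫ = ⟪ℓ, u⟫ + tt * ⟪ℓ, d⟫ := by
        rw [inner_add_right, real_inner_smul_right]
      have hge : 0 ≤ ⟪ℓ, d⟫ := by
        rw [he] at h1; nlinarith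
      rcases hge.lt_or_eq with h | h
      · exact h
      · exfalso
        have heq : ⟪ℓ, u + tt • d⟫ = ⟪ℓ, u⟫ := by rw [he, ← h, mul_zero, add_zero]
        have hzz := (hℓ _ hmemQ).2 heq
        have h4 : tt • d = 0 := by
          have := congrArg (fun y => y - u) hzz
          simpa [add_sub_cancel_left] using this
        rcases smul_eq_zero.1 h4 with h5 | h5
        · exact absurd h5 (ne_of_gt httpos)
        · exact hd0 h5
    have hKclosed : IsClosed K := by rw [htK]; exact isClosed_poly tK
    have hKpos : ∀ k ∈ K, k ≠ 0 → 0 < ⟪ℓ, k⟫ := by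
      intro k hk hk0
      have hm : u + k ∈ P + K := ⟨u, huP, k, hk, rfl⟩
      have h1 := (hℓ _ hm).1
      have he : ⟪ℓ, u + k⟫ = ⟪ℓ, u⟫ + ⟪ℓ, k⟫ := inner_add_right _ _ _
      have hge : 0 ≤ ⟪ℓ, k⟫ := by rw [he] at h1; linarith
      rcases hge.lt_or_eq with h | h
      · exact h
      · exfalso
        have heq : ⟪ℓ, u + k⟫ = ⟪ℓ, u⟫ := by rw [he, ← h, add_zero]
        have hzz := (hℓ _ hm).2 heq
        have h4 : k = 0 := by
          have := congrArg (fun y => y - u) hzz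
          simpa [add_sub_cancel_left] using this
        exact hk0 h4
    obtain ⟨ε₁, hε₁, hT⟩ := eps_lemma hTclosed hTcone hTpos
    obtain ⟨ε₂, hε₂, hKe⟩ := eps_lemma hKclosed hKcone hKpos
    set ε := min ε₁ ε₂ with hεdef
    have hεpos : 0 < ε := lt_min hε₁ hε₂
    have hball : Metric.ball ℓ ε ⊆ dualCone K ∩ normalCone P u := by
      intro ℓ' hℓ'
      have hdist : ‖ℓ' - ℓ‖ < ε := by
        rw [← dist_eq_norm]; exact Metric.mem_ball.1 hℓ'
      have hcs : ∀ w : Euc n, -(‖ℓ' - ℓ‖ * ‖w‖) ≤ ⟪ℓ' - ℓ, w⟫ := by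
        intro w
        have habs := abs_real_inner_le_norm (ℓ' - ℓ) w
        have := neg_abs_le ⟪ℓ' - ℓ, w⟫
        linarith
      constructor
      · intro c hc
        rw [real_inner_comm]
        have h2 := hKe c hc
        have h3 : ⟪ℓ' - ℓ, c⟫ = ⟪ℓ', c⟫ - ⟪ℓ, c⟫ := inner_sub_left _ _ _
        have h4 : ‖ℓ' - ℓ‖ * ‖c‖ ≤ ε₂ * ‖c‖ :=
          mul_le_mul_of_nonneg_right
            (le_of_lt (lt_of_lt_of_le hdist (min_le_right _ _))) (norm_nonneg c)
        have h5 := hcs c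
        linarith
      · intro x hx
        have hxT : x - u ∈ T := by
          intro p hp hact
          rw [hs] at hx
          have h6 := hx p hp
          rw [inner_sub_right]
          linarith
        have h2 := hT _ hxT
        have h3 : ⟪ℓ' - ℓ, x - u⟫ = ⟪ℓ', x - u⟫ - ⟪ℓ, x - u⟫ := inner_sub_left _ _ _
        have h4 : ‖ℓ' - ℓ‖ * ‖x - u‖ ≤ ε₁ * ‖x - u‖ :=
          mul_le_mul_of_nonneg_right
            (le_of_lt (lt_of_lt_of_le hdist (min_le_left _ _))) (norm_nonneg _)
        have h5 := hcs (x - u)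
        have h7 : ⟪ℓ', x - u⟫ = ⟪ℓ', x⟫ - ⟪ℓ', u⟫ := inner_sub_right _ _ _
        have h8 : 0 ≤ ⟪ℓ', x - u⟫ := by linarith
        rw [h7] at h8
        linarith
    exact ⟨ℓ, (interior_maximal hball Metric.isOpen_ball) (Metric.mem_ball_self hεpos)⟩
  · -- backward direction
    rintro ⟨ℓ₀, hℓ₀⟩
    obtain ⟨ε, hε, hball⟩ := Metric.isOpen_iff.1 isOpen_interior ℓ₀ hℓ₀
    have hballC : Metric.ball ℓ₀ ε ⊆ dualCone K ∩ normalCone P u :=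
      hball.trans interior_subset
    have hC : ℓ₀ ∈ dualCone K ∩ normalCone P u := interior_subset hℓ₀
    refine ⟨hPsub hu.1, ℓ₀, ?_⟩
    rintro x ⟨p, hp, k, hk, rfl⟩
    have h1 : ⟪ℓ₀, u⟫ ≤ ⟪ℓ₀, p⟫ := hC.2 p hp
    have h2 : 0 ≤ ⟪ℓ₀, k⟫ := by
      have := hC.1 k hk; rwa [real_inner_comm] at this
    have hsum : ⟪ℓ₀, p + k⟫ = ⟪ℓ₀, p⟫ + ⟪ℓ₀, k⟫ := inner_add_right _ _ _
    constructor
    · rw [hsum]; linarith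
    · intro he
      rw [hsum] at he
      have hpe : ⟪ℓ₀, p⟫ = ⟪ℓ₀, u⟫ := by linarith
      have hke : ⟪ℓ₀, k⟫ = 0 := by linarith
      have hk0 : k = 0 := by
        refine kill_lemma hε hke fun ℓ' hℓ' => ?_
        have := (hballC hℓ').1 k hk
        rwa [real_inner_comm] at this
      have hpu0 : ⟪ℓ₀, p - u⟫ = 0 := by rw [inner_sub_right]; linarith
      have hpu : p - u = 0 := by
        refine kill_lemma hε hpu0 fun ℓ' hℓ' => ?_
        have := (hballC hℓ').2 p hp
        rw [inner_sub_right]; linarith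
      have hp' : p = u := by
        have := sub_eq_zero.1 hpu; exact this
      rw [hp', hk0]; simp
end
end

section
/- Local-to-global direction of the local-global principle: if P̂₀ is a global polyhedral solution to a polyhedral polynomial φ (i.e. the normal fan of P̂₀ contains the normal fan of M), then for every vertex v of M, the polyhedron S_v = P̂₀ ⊙ (N_M(v))* is a complete v-local solution to φ; moreover every vertex γ of S_v is a vertex of P̂₀ with N_{S_v}(γ) = N_{P̂₀}(γ) ∩ N_M(v), and consequently the orientation property (P) holds: whenever N_M(v) ∩ N_{P₀}(γ) is full-dimensional for a vertex γ of P₀ = CH(∪_v V(S_v)), γ is a vertex of S_v. -/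
open scoped Pointwise RealInnerProductSpace

noncomputable section

/-- The support (normal fan support) of a polyhedron: the union of the normal
cones of its vertices. -/
def SuppFan {n : ℕ} (P : Set (Euc n)) : Set (Euc n) :=
  ⋃ v ∈ {x | IsVertex P x}, normalCone P v

/-- A complete v-local solution: a root whose support equals N_M(v). -/
def IsCompleteLocalSolution {n : ℕ} (S : Finset ℕ) (Q : ℕ → Set (Euc n))
    (M : Set (Euc n)) (v : Euc n) (P : Set (Euc n)) : Prop :=
  IsRoot S Q P ∧ SuppFan P = normalCone M v

/-- A global solution: a root whose normal fan contains that of M, i.e. each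
normal cone of M is contained in the normal cone of some vertex of the root. -/
def IsGlobalSolution {n : ℕ} (S : Finset ℕ) (Q : ℕ → Set (Euc n))
    (M : Set (Euc n)) (P : Set (Euc n)) : Prop :=
  IsRoot S Q P ∧ ∀ v, IsVertex M v → ∃ γ, IsVertex P γ ∧ normalCone M v ⊆ normalCone P γ

/-- The restriction S_v = P ⊙ (N_M(v))* of a global solution to the vertex v. -/
def locPart {n : ℕ} (P M : Set (Euc n)) (v : Euc n) : Set (Euc n) :=
  P + dualCone (normalCone M v)


/-!
Write `D = (N_M(v))*`, so `S_v = P̂₀ + D`. By Farkas' lemma `D* = N_M(v)`, hence every normal cone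
of `S_v` is the corresponding normal cone of `P̂₀` cut down to `N_M(v)`, and a vertex of `S_v` is a
vertex of `P̂₀`. As `M` is a Minkowski sum of polyhedra, a functional exposing `v` has a sharp
minimum there, so `N_M(v)` has interior points; such a point is coercive on `D`, and tilting it
slightly towards a functional exposing the vertex `γ₀` of `P̂₀` with `N_M(v) ⊆ N_{P̂₀}(γ₀)`
exposes `γ₀` in `S_v`. This makes the support of `S_v` all of `N_M(v)`.

Roots survive because a vertex `w` of `φ(S_v)` already lies in `φ(P̂₀) ⊆ φ(S_v)`, where its exposing
functional still exposes it. For (P), a functional `ℓ` interior to `N_M(v) ∩ N_{P₀}(γ)` lies in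
the normal cone of `S_v` at some vertex `β`; then `ℓ` is minimised on `P̂₀ ∋ γ` at `β`, and every
perturbation of `ℓ` is minimised on `P₀ ∋ β` at `γ`, which forces `β = γ`.
-/

open Filter Topology

section SharpMinimum

variable {F : Type*} [NormedAddCommGroup F] [InnerProductSpace ℝ F]

def UniquelyMinimizes (ℓ : F) (P : Set F) (v : F) : Prop :=
  ∀ x ∈ P, ⟪ℓ, v⟫ ≤ ⟪ℓ, x⟫ ∧ (⟪ℓ, x⟫ = ⟪ℓ, v⟫ → x = v)

lemma UniquelyMinimizes.mono {ℓ v : F} {P P' : Set F} (h : UniquelyMinimizes ℓ P' v)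
    (hPP' : P ⊆ P') : UniquelyMinimizes ℓ P v :=
  fun x hx => h x (hPP' hx)

lemma UniquelyMinimizes.of_add {ℓ a b : F} {A B : Set F} (h : UniquelyMinimizes ℓ (A + B) (a + b))
    (ha : a ∈ A) (hb : b ∈ B) : UniquelyMinimizes ℓ A a ∧ UniquelyMinimizes ℓ B b := by
  refine ⟨fun x hx => ?_, fun y hy => ?_⟩
  · obtain ⟨hle, heq⟩ := h (x + b) (Set.add_mem_add hx hb)
    simp only [inner_add_right, add_le_add_iff_right, add_left_inj] at hle heq
    exact ⟨hle, fun hx' => heq (by rw [hx'])⟩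
  · obtain ⟨hle, heq⟩ := h (a + y) (Set.add_mem_add ha hy)
    simp only [inner_add_right, add_le_add_iff_left, add_right_inj] at hle heq
    exact ⟨hle, fun hy' => heq (by rw [hy'])⟩

lemma inner_nonneg_of_forall_add_smul_mem {T : Set F} {ℓ x₀ d : F} {m : ℝ}
    (hray : ∀ t : ℝ, 0 ≤ t → x₀ + t • d ∈ T) (hm : ∀ x ∈ T, m ≤ ⟪ℓ, x⟫) : 0 ≤ ⟪ℓ, d⟫ := by
  by_contra! hneg
  have hx₀ : m ≤ ⟪ℓ, x₀⟫ := by simpa using hm _ (hray 0 le_rfl)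
  set t := (⟪ℓ, x₀⟫ - m + 1) / -⟪ℓ, d⟫
  have htd : t * -⟪ℓ, d⟫ = ⟪ℓ, x₀⟫ - m + 1 := div_mul_cancel₀ _ (by linarith)
  have := hm _ (hray t (div_nonneg (by linarith) (by linarith)))
  rw [inner_add_right, real_inner_smul_right] at this
  linarith

lemma eq_zero_of_eventually_inner_nonneg {ℓ x : F} (h : ∀ᶠ ℓ' in 𝓝 ℓ, 0 ≤ ⟪ℓ', x⟫)
    (hℓ : ⟪ℓ, x⟫ ≤ 0) : x = 0 := by
  have hcont : Continuous fun t : ℝ => ℓ - t • x := by fun_prop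
  have hlim : Tendsto (fun t : ℝ => ℓ - t • x) (𝓝[>] 0) (𝓝 ℓ) :=
    tendsto_nhdsWithin_of_tendsto_nhds (hcont.tendsto' 0 ℓ (by simp))
  obtain ⟨t, ht, htpos⟩ := ((hlim.eventually h).and self_mem_nhdsWithin).exists
  rw [inner_sub_left, real_inner_smul_left, real_inner_self_eq_norm_sq] at ht
  have htpos : 0 < t := htpos
  have : ‖x‖ ^ 2 ≤ 0 := by nlinarith
  simpa using this

/-- The constant is `1 / r` times the minimum of `⟪ℓ, · - v⟫` on the compact set
`P ∩ sphere v r`. -/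
lemma exists_sharp_of_mem_sphere [FiniteDimensional ℝ F] {P : Set F} {ℓ v : F} (hP : IsClosed P)
    (hmin : UniquelyMinimizes ℓ P v) {r : ℝ} (hr : 0 < r) :
    ∃ η > 0, ∀ x ∈ P, v + (r / ‖x - v‖) • (x - v) ∈ P → η * ‖x - v‖ ≤ ⟪ℓ, x - v⟫ := by
  obtain ⟨η, hη, hηK⟩ : ∃ η > 0, ∀ y ∈ P ∩ Metric.sphere v r, η ≤ ⟪ℓ, y - v⟫ := by
    rcases (P ∩ Metric.sphere v r).eq_empty_or_nonempty with hK | hK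
    · exact ⟨1, one_pos, by simp [hK]⟩
    obtain ⟨y₀, ⟨hy₀P, hy₀r⟩, hy₀min⟩ := ((isCompact_sphere v r).inter_left hP).exists_isMinOn hK
      (f := fun y => ⟪ℓ, y - v⟫) (by fun_prop)
    have hy₀v : y₀ ≠ v := by
      rintro rfl; simp [hr.ne] at hy₀r
    obtain ⟨hle, heq⟩ := hmin y₀ hy₀P
    refine ⟨⟪ℓ, y₀ - v⟫, ?_, fun y hy => hy₀min hy⟩
    rw [inner_sub_right]
    exact sub_pos.2 (hle.lt_of_ne fun h => hy₀v (heq h.symm))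
  refine ⟨η / r, div_pos hη hr, fun x hx hray => ?_⟩
  rcases eq_or_ne x v with rfl | hxv
  · simp
  have hpos : 0 < ‖x - v‖ := norm_pos_iff.2 (sub_ne_zero.2 hxv)
  have hsphere : v + (r / ‖x - v‖) • (x - v) ∈ Metric.sphere v r := by
    simp [norm_smul, abs_of_pos hr, hpos.ne']
  have := hηK _ ⟨hray, hsphere⟩
  rw [add_sub_cancel_left, real_inner_smul_right, div_mul_eq_mul_div, le_div_iff₀ hpos] at this
  rw [div_mul_eq_mul_div, div_le_iff₀ hr]
  linarith

lemma isBounded_sublevel_of_uniquelyMinimizes [FiniteDimensional ℝ F] {E : Set F} {ℓ w : F}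
    (hc : IsClosed E) (hconv : Convex ℝ E) (hw : w ∈ E) (hmin : UniquelyMinimizes ℓ E w)
    (c : ℝ) : Bornology.IsBounded {x ∈ E | ⟪ℓ, x⟫ ≤ c} := by
  obtain ⟨η, hη, hsharp⟩ := exists_sharp_of_mem_sphere hc hmin one_pos
  refine (Metric.isBounded_closedBall (x := w) (r := max 1 ((c - ⟪ℓ, w⟫) / η))).subset ?_
  rintro x ⟨hx, hxc⟩
  rw [Metric.mem_closedBall, dist_eq_norm]
  rcases le_or_gt ‖x - w‖ 1 with h1 | h1
  · exact h1.trans (le_max_left _ _)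
  have hseg : w + (1 / ‖x - w‖) • (x - w) ∈ E :=
    hconv.add_smul_sub_mem hw hx ⟨by positivity, (div_le_one (by linarith)).2 h1.le⟩
  have := hsharp x hx hseg
  rw [inner_sub_right] at this
  exact le_max_of_le_right ((le_div_iff₀ hη).2 (by linarith))

lemma isClosed_add_of_isBounded_sublevel [FiniteDimensional ℝ F] {E D : Set F} {ℓ : F}
    (hE : IsClosed E) (hD : IsClosed D) (hℓD : ∀ d ∈ D, 0 ≤ ⟪ℓ, d⟫)
    (hbdd : ∀ c, Bornology.IsBounded {x ∈ E | ⟪ℓ, x⟫ ≤ c}) : IsClosed (E + D) := by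
  refine closure_subset_iff_isClosed.1 fun w hw => ?_
  set c := ⟪ℓ, w⟫ + 1
  have hK : IsCompact {x ∈ E | ⟪ℓ, x⟫ ≤ c} :=
    (hbdd c).isCompact_closure.of_isClosed_subset
      (hE.inter (isClosed_le (continuous_const.inner continuous_id) continuous_const :
        IsClosed {x : F | ⟪ℓ, x⟫ ≤ c})) subset_closure
  have hU : IsOpen {x | ⟪ℓ, x⟫ < c} :=
    isOpen_lt (continuous_const.inner continuous_id) continuous_const
  have hnear : {x | ⟪ℓ, x⟫ < c} ∩ (E + D) ⊆ {x ∈ E | ⟪ℓ, x⟫ ≤ c} + D := by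
    rintro _ ⟨hlt, e, he, d, hd, rfl⟩
    change ⟪ℓ, e + d⟫ < c at hlt
    rw [inner_add_right] at hlt
    exact Set.add_mem_add ⟨he, by linarith [hℓD d hd]⟩ hd
  have hwKD := closure_mono hnear (hU.inter_closure ⟨by simp [c], hw⟩)
  rw [(hD.add_left_of_isCompact hK).closure_eq] at hwKD
  exact Set.add_subset_add_right (fun x hx => hx.1) hwKD

end SharpMinimum

section Polyhedra

variable {F : Type*} [NormedAddCommGroup F] [InnerProductSpace ℝ F]

lemma exists_add_smul_sub_mem_halfspaces {ι : Type*} (s : Finset ι) (a : ι → F) (b : ι → ℝ)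
    {v : F} (hv : ∀ p ∈ s, ⟪a p, v⟫ ≤ b p) :
    ∃ ρ > 0, ∀ x, (∀ p ∈ s, ⟪a p, x⟫ ≤ b p) → ∀ t : ℝ, 0 ≤ t → t * ‖x - v‖ ≤ ρ →
      ∀ p ∈ s, ⟪a p, v + t • (x - v)⟫ ≤ b p := by
  have hface : ∀ p ∈ s, ∀ᶠ ρ in 𝓝[>] (0 : ℝ), ∀ x, (∀ q ∈ s, ⟪a q, x⟫ ≤ b q) →
      ∀ t : ℝ, 0 ≤ t → t * ‖x - v‖ ≤ ρ → ⟪a p, v + t • (x - v)⟫ ≤ b p := by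
    intro p hp
    rcases (hv p hp).eq_or_lt with hactive | hslack
    · refine Eventually.of_forall fun ρ x hx t ht _ => ?_
      rw [inner_add_right, real_inner_smul_right, inner_sub_right]
      nlinarith [hx p hp]
    · have hsmall : ∀ᶠ ρ in 𝓝 (0 : ℝ), ‖a p‖ * ρ < b p - ⟪a p, v⟫ :=
        ((continuous_const.mul continuous_id).tendsto' 0 0 (by simp)).eventually
          (gt_mem_nhds (sub_pos.2 hslack))
      filter_upwards [nhdsWithin_le_nhds hsmall] with ρ hρ x _ t ht htρ
      rw [inner_add_right, real_inner_smul_right]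
      have h1 := mul_le_mul_of_nonneg_left (real_inner_le_norm (a p) (x - v)) ht
      have h2 := mul_le_mul_of_nonneg_left htρ (norm_nonneg (a p))
      nlinarith
  obtain ⟨ρ, hρ, hρpos⟩ := (((eventually_all_finset s).2 hface).and self_mem_nhdsWithin).exists
  exact ⟨ρ, hρpos, fun x hx t ht htρ p hp => hρ p hp x hx t ht htρ⟩

lemma exists_sharp_of_halfspaces [FiniteDimensional ℝ F] {ι : Type*} (s : Finset ι)
    (a : ι → F) (b : ι → ℝ) {ℓ v : F} (hv : ∀ p ∈ s, ⟪a p, v⟫ ≤ b p)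
    (hmin : UniquelyMinimizes ℓ {x | ∀ p ∈ s, ⟪a p, x⟫ ≤ b p} v) :
    ∃ η > 0, ∀ x, (∀ p ∈ s, ⟪a p, x⟫ ≤ b p) → η * ‖x - v‖ ≤ ⟪ℓ, x - v⟫ := by
  have hclosed : IsClosed {x | ∀ p ∈ s, ⟪a p, x⟫ ≤ b p} := by
    simp only [Set.ofPred_forall]
    exact isClosed_biInter fun p _ =>
      isClosed_le (continuous_const.inner continuous_id) continuous_const
  obtain ⟨ρ, hρ, hcone⟩ := exists_add_smul_sub_mem_halfspaces s a b hv
  obtain ⟨η, hη, hsharp⟩ := exists_sharp_of_mem_sphere hclosed hmin hρ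
  refine ⟨η, hη, fun x hx => hsharp x hx (hcone x hx _ (by positivity) ?_)⟩
  rcases eq_or_ne ‖x - v‖ 0 with h | h
  · simp [h, hρ.le]
  · rw [div_mul_cancel₀ _ h]

lemma exists_sharp_add {A B : Set F} {ℓ a b : F}
    (hA : ∃ η > 0, ∀ x ∈ A, η * ‖x - a‖ ≤ ⟪ℓ, x - a⟫)
    (hB : ∃ η > 0, ∀ y ∈ B, η * ‖y - b‖ ≤ ⟪ℓ, y - b⟫) :
    ∃ η > 0, ∀ z ∈ A + B, η * ‖z - (a + b)‖ ≤ ⟪ℓ, z - (a + b)⟫ := by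
  obtain ⟨η₁, hη₁, hA⟩ := hA
  obtain ⟨η₂, hη₂, hB⟩ := hB
  refine ⟨min η₁ η₂, lt_min hη₁ hη₂, ?_⟩
  rintro _ ⟨x, hx, y, hy, rfl⟩
  have hsplit : x + y - (a + b) = (x - a) + (y - b) := by abel
  have hmin : 0 ≤ min η₁ η₂ := (lt_min hη₁ hη₂).le
  calc min η₁ η₂ * ‖x + y - (a + b)‖
      ≤ min η₁ η₂ * ‖x - a‖ + min η₁ η₂ * ‖y - b‖ := by
        rw [hsplit, ← mul_add]; exact mul_le_mul_of_nonneg_left (norm_add_le _ _) hmin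
    _ ≤ η₁ * ‖x - a‖ + η₂ * ‖y - b‖ := by gcongr; exacts [min_le_left _ _, min_le_right _ _]
    _ ≤ ⟪ℓ, x + y - (a + b)⟫ := by
        rw [hsplit, inner_add_right]; exact add_le_add (hA x hx) (hB y hy)

end Polyhedra

variable {n : ℕ}

lemma IsRatPolyhedron.exists_sharp {P : Set (Euc n)} (hP : IsRatPolyhedron P) {ℓ v : Euc n}
    (hv : v ∈ P) (hmin : UniquelyMinimizes ℓ P v) :
    ∃ η > 0, ∀ x ∈ P, η * ‖x - v‖ ≤ ⟪ℓ, x - v⟫ := by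
  obtain ⟨s, rfl⟩ := hP
  let a : (Fin n → ℚ) × ℚ → Euc n := fun p => WithLp.toLp 2 fun i => (p.1 i : ℝ)
  have ha : ∀ p x, ⟪a p, x⟫ = ∑ i, (p.1 i : ℝ) * x i := fun p x => by
    simp [a, PiLp.inner_apply, mul_comm]
  simp only [← ha] at hv hmin ⊢
  exact exists_sharp_of_halfspaces s a (fun p => (p.2 : ℝ)) hv hmin

lemma exists_sharp_finset_sum {ι : Type*} {S : Finset ι} {Q : ι → Set (Euc n)}
    (hQ : ∀ i ∈ S, IsRatPolyhedron (Q i)) {ℓ v : Euc n} (hv : v ∈ ∑ i ∈ S, Q i)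
    (hmin : UniquelyMinimizes ℓ (∑ i ∈ S, Q i) v) :
    ∃ η > 0, ∀ x ∈ ∑ i ∈ S, Q i, η * ‖x - v‖ ≤ ⟪ℓ, x - v⟫ := by
  classical
  induction S using Finset.induction_on generalizing v with
  | empty =>
    rw [Finset.sum_empty, Set.mem_zero] at hv
    exact ⟨1, one_pos, fun x hx => by simp_all⟩
  | insert i S hi ih =>
    rw [Finset.sum_insert hi] at hv hmin ⊢
    obtain ⟨q, hq, m, hm, rfl⟩ := hv
    obtain ⟨hminq, hminm⟩ := hmin.of_add hq hm
    exact exists_sharp_add ((hQ i (Finset.mem_insert_self i S)).exists_sharp hq hminq)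
      (ih (fun j hj => hQ j (Finset.mem_insert_of_mem hj)) hm hminm)

lemma ball_subset_normalCone {P : Set (Euc n)} {ℓ v : Euc n} {η : ℝ}
    (hsharp : ∀ x ∈ P, η * ‖x - v‖ ≤ ⟪ℓ, x - v⟫) : Metric.ball ℓ η ⊆ normalCone P v := by
  intro ℓ' hℓ' x hx
  rw [Metric.mem_ball, dist_eq_norm] at hℓ'
  have hsplit : ⟪ℓ', x - v⟫ = ⟪ℓ, x - v⟫ + ⟪ℓ' - ℓ, x - v⟫ := by
    rw [← inner_add_left, add_sub_cancel]
  have h1 := mul_le_mul_of_nonneg_right hℓ'.le (norm_nonneg (x - v))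
  have h2 := neg_le_of_abs_le (abs_real_inner_le_norm (ℓ' - ℓ) (x - v))
  have : 0 ≤ ⟪ℓ', x - v⟫ := by linarith [hsharp x hx]
  rwa [inner_sub_right, sub_nonneg] at this

lemma interior_normalCone_finset_sum_nonempty {ι : Type*} {S : Finset ι} {Q : ι → Set (Euc n)}
    (hQ : ∀ i ∈ S, IsRatPolyhedron (Q i)) {v : Euc n} (hv : IsVertex (∑ i ∈ S, Q i) v) :
    (interior (normalCone (∑ i ∈ S, Q i) v)).Nonempty := by
  obtain ⟨hvM, ℓ, hℓ⟩ := hv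
  obtain ⟨η, hη, hsharp⟩ := exists_sharp_finset_sum hQ hvM hℓ
  exact ⟨ℓ, interior_maximal (ball_subset_normalCone hsharp) Metric.isOpen_ball
    (Metric.mem_ball_self hη)⟩

lemma zero_mem_dualCone (C : Set (Euc n)) : (0 : Euc n) ∈ dualCone C :=
  fun ℓ _ => (inner_zero_right ℓ).ge

lemma add_mem_dualCone {C : Set (Euc n)} {d e : Euc n} (hd : d ∈ dualCone C)
    (he : e ∈ dualCone C) : d + e ∈ dualCone C := fun ℓ hℓ => by
  rw [inner_add_right]; exact add_nonneg (hd ℓ hℓ) (he ℓ hℓ)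

lemma smul_mem_dualCone {C : Set (Euc n)} {d : Euc n} (hd : d ∈ dualCone C) {t : ℝ}
    (ht : 0 ≤ t) : t • d ∈ dualCone C := fun ℓ hℓ => by
  rw [real_inner_smul_right]; exact mul_nonneg ht (hd ℓ hℓ)

lemma convex_dualCone (C : Set (Euc n)) : Convex ℝ (dualCone C) :=
  fun _ hx _ hy _ _ ha hb _ => add_mem_dualCone (smul_mem_dualCone hx ha) (smul_mem_dualCone hy hb)

lemma isClosed_dualCone (C : Set (Euc n)) : IsClosed (dualCone C) :=
  (ProperCone.innerDual C).isClosed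

lemma dualCone_add_dualCone (C : Set (Euc n)) : dualCone C + dualCone C = dualCone C :=
  subset_antisymm (Set.add_subset_iff.2 fun _ hd _ he => add_mem_dualCone hd he)
    fun d hd => ⟨d, hd, 0, zero_mem_dualCone C, add_zero d⟩

lemma subset_add_dualCone (P C : Set (Euc n)) : P ⊆ P + dualCone C :=
  fun p hp => ⟨p, hp, 0, zero_mem_dualCone C, add_zero p⟩

/-- The normal cone is the inner dual of `P - v`, a closed convex cone, so Farkas' lemma applies. -/
lemma dualCone_dualCone_normalCone (P : Set (Euc n)) (v : Euc n) :
    dualCone (dualCone (normalCone P v)) = normalCone P v := by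
  have hN : normalCone P v = ProperCone.innerDual ((· - v) '' P) := by
    ext ℓ
    simp [normalCone, inner_sub_right, real_inner_comm ℓ]
  rw [hN]
  exact congrArg SetLike.coe (ProperCone.innerDual_innerDual _)

lemma normalCone_add_dualCone {P : Set (Euc n)} (hP : P.Nonempty) (C : Set (Euc n))
    (γ : Euc n) : normalCone (P + dualCone C) γ = normalCone P γ ∩ dualCone (dualCone C) := by
  ext ℓ
  constructor
  · intro h
    obtain ⟨p₀, hp₀⟩ := hP
    refine ⟨fun p hp => h p (subset_add_dualCone P C hp), fun d hd => ?_⟩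
    rw [real_inner_comm]
    exact inner_nonneg_of_forall_add_smul_mem
      (fun t ht => Set.add_mem_add hp₀ (smul_mem_dualCone hd ht)) h
  · rintro ⟨hP, hC⟩ _ ⟨p, hp, d, hd, rfl⟩
    have := hC d hd
    rw [real_inner_comm] at this
    rw [inner_add_right]
    linarith [hP p hp]

lemma IsVertex.of_subset {P P' : Set (Euc n)} {w : Euc n} (h : IsVertex P' w) (hw : w ∈ P)
    (hPP' : P ⊆ P') : IsVertex P w :=
  ⟨hw, h.2.imp fun _ hℓ => UniquelyMinimizes.mono hℓ hPP'⟩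

lemma IsVertex.mem_extremePoints {P : Set (Euc n)} {γ : Euc n} (h : IsVertex P γ) :
    γ ∈ P.extremePoints ℝ := by
  obtain ⟨hγ, ℓ, hℓ⟩ := h
  refine exposedPoints_subset_extremePoints ⟨hγ, -innerSL ℝ ℓ, fun y hy => ?_⟩
  simp only [neg_apply, innerSL_apply_apply, neg_le_neg_iff]
  exact ⟨(hℓ y hy).1, fun h => (hℓ y hy).2 (h.antisymm (hℓ y hy).1)⟩

lemma IsVertex.of_add_dualCone {P C : Set (Euc n)} {γ : Euc n}
    (h : IsVertex (P + dualCone C) γ) : IsVertex P γ := by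
  obtain ⟨hγ, ℓ, hℓ⟩ := h
  obtain ⟨p, hp, d, hd, rfl⟩ := Set.mem_add.1 hγ
  have hd_nonneg : 0 ≤ ⟪ℓ, d⟫ := by
    have := (hℓ (p + d + d) ⟨p, hp, d + d, add_mem_dualCone hd hd, (add_assoc _ _ _).symm⟩).1
    rw [inner_add_right _ (p + d)] at this
    linarith
  have hp_min := hℓ p (subset_add_dualCone P C hp)
  have hpγ : p = p + d := hp_min.2 (by rw [inner_add_right] at hp_min ⊢; linarith [hp_min.1])
  rw [← hpγ] at hℓ ⊢
  exact ⟨hp, ℓ, UniquelyMinimizes.mono hℓ (subset_add_dualCone P C)⟩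

lemma exists_pos_mul_norm_le_inner_of_mem_interior {C : Set (Euc n)} {ℓ₀ : Euc n}
    (hℓ₀ : ℓ₀ ∈ interior C) : ∃ δ > 0, ∀ d ∈ dualCone C, δ * ‖d‖ ≤ ⟪ℓ₀, d⟫ := by
  obtain ⟨ε, hε, hball⟩ := Metric.mem_nhds_iff.1 (mem_interior_iff_mem_nhds.1 hℓ₀)
  refine ⟨ε / 2, half_pos hε, fun d hd => ?_⟩
  rcases eq_or_ne d 0 with rfl | hd0
  · simp
  have hdpos : 0 < ‖d‖ := norm_pos_iff.2 hd0
  have hmem : ℓ₀ - (ε / 2 / ‖d‖) • d ∈ C := hball <| by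
    rw [Metric.mem_ball, dist_eq_norm, sub_sub_cancel_left, norm_neg, norm_smul,
      Real.norm_of_nonneg (by positivity), div_mul_cancel₀ _ hdpos.ne']
    exact half_lt_self hε
  have := hd _ hmem
  rw [inner_sub_left, real_inner_smul_left, real_inner_self_eq_norm_sq] at this
  have hsq : ε / 2 / ‖d‖ * ‖d‖ ^ 2 = ε / 2 * ‖d‖ := by field_simp
  linarith

/-- Tilting an exposing functional of `γ` by a small multiple keeps it inside the open cone `C`,
where it is coercive on `dualCone C`. -/
lemma IsVertex.add_dualCone {P C : Set (Euc n)} {γ ℓ₀ : Euc n} (hγ : IsVertex P γ)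
    (hℓ₀ : ℓ₀ ∈ interior C) (hℓ₀γ : ℓ₀ ∈ normalCone P γ) : IsVertex (P + dualCone C) γ := by
  obtain ⟨hγP, ℓ₁, hℓ₁⟩ := hγ
  obtain ⟨δ, hδ, hcoer⟩ := exists_pos_mul_norm_le_inner_of_mem_interior hℓ₀
  set ε := δ / (‖ℓ₁‖ + 1)
  have hε : 0 < ε := by positivity
  have hδε : δ = ε * ‖ℓ₁‖ + ε := by simp only [ε]; field_simp
  refine ⟨subset_add_dualCone P C hγP, ℓ₀ + ε • ℓ₁, fun x hx => ?_⟩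
  obtain ⟨p, hp, d, hd, rfl⟩ := Set.mem_add.1 hx
  have h₀ : 0 ≤ ⟪ℓ₀, p⟫ - ⟪ℓ₀, γ⟫ := sub_nonneg.2 (hℓ₀γ p hp)
  have h₁ : 0 ≤ ⟪ℓ₁, p⟫ - ⟪ℓ₁, γ⟫ := sub_nonneg.2 (hℓ₁ p hp).1
  have hd' : ε * ‖d‖ ≤ ⟪ℓ₀, d⟫ + ε * ⟪ℓ₁, d⟫ := by
    have hc := hcoer d hd
    have := mul_le_mul_of_nonneg_left (neg_le_of_abs_le (abs_real_inner_le_norm ℓ₁ d)) hε.le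
    rw [hδε] at hc
    linarith
  have hgap : ⟪ℓ₀ + ε • ℓ₁, p + d⟫ - ⟪ℓ₀ + ε • ℓ₁, γ⟫
      = (⟪ℓ₀, p⟫ - ⟪ℓ₀, γ⟫) + ε * (⟪ℓ₁, p⟫ - ⟪ℓ₁, γ⟫) + (⟪ℓ₀, d⟫ + ε * ⟪ℓ₁, d⟫) := by
    simp only [inner_add_left, inner_add_right, real_inner_smul_left]; ring
  have hεd := mul_nonneg hε.le (norm_nonneg d)
  have hεp := mul_nonneg hε.le h₁
  refine ⟨by linarith, fun heq => ?_⟩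
  have hd0 : d = 0 := norm_eq_zero.1 (by nlinarith)
  have hp0 : ⟪ℓ₁, p⟫ = ⟪ℓ₁, γ⟫ := by nlinarith
  rw [hd0, add_zero]
  exact (hℓ₁ p hp).2 hp0

lemma mpow_mono {P P' : Set (Euc n)} (h : P ⊆ P') : ∀ k, mpow P k ⊆ mpow P' k
  | 0 => subset_rfl
  | k + 1 => Set.add_subset_add h (mpow_mono h k)

lemma mpow_succ_add_dualCone (P C : Set (Euc n)) :
    ∀ k, mpow (P + dualCone C) (k + 1) = mpow P (k + 1) + dualCone C
  | 0 => by simp only [mpow, Set.singleton_zero, add_zero]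
  | k + 1 => by
    show P + dualCone C + mpow (P + dualCone C) (k + 1) = P + mpow P (k + 1) + dualCone C
    rw [mpow_succ_add_dualCone P C k, add_add_add_comm, dualCone_add_dualCone]

lemma add_mpow_add_dualCone_subset (Q P C : Set (Euc n)) (k : ℕ) :
    Q + mpow (P + dualCone C) k ⊆ Q + mpow P k + dualCone C := by
  cases k with
  | zero => exact subset_add_dualCone _ C
  | succ k => rw [mpow_succ_add_dualCone, add_assoc]

lemma add_mpow_succ_add_dualCone_absorb (Q P C : Set (Euc n)) (k : ℕ) :
    Q + mpow (P + dualCone C) (k + 1) + dualCone C = Q + mpow (P + dualCone C) (k + 1) := by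
  rw [mpow_succ_add_dualCone, add_assoc, add_assoc, dualCone_add_dualCone]

lemma subset_polyEval {S : Finset ℕ} {i : ℕ} (hi : i ∈ S) (Q : ℕ → Set (Euc n))
    (P : Set (Euc n)) : Q i + mpow P i ⊆ polyEval S Q P :=
  fun _ hx => subset_closure (subset_convexHull ℝ _ (Set.mem_iUnion₂.2 ⟨i, hi, hx⟩))

lemma convex_polyEval (S : Finset ℕ) (Q : ℕ → Set (Euc n)) (P : Set (Euc n)) :
    Convex ℝ (polyEval S Q P) :=
  (convex_convexHull ℝ _).closure

lemma polyEval_mono (S : Finset ℕ) (Q : ℕ → Set (Euc n)) {P P' : Set (Euc n)} (h : P ⊆ P') :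
    polyEval S Q P ⊆ polyEval S Q P' :=
  closure_mono <| convexHull_mono <| Set.iUnion₂_mono fun i _ =>
    Set.add_subset_add_left (mpow_mono h i)

lemma polyEval_add_dualCone_subset {S : Finset ℕ} {Q : ℕ → Set (Euc n)} {P C : Set (Euc n)}
    (hclosed : IsClosed (polyEval S Q P + dualCone C)) :
    polyEval S Q (P + dualCone C) ⊆ polyEval S Q P + dualCone C := by
  refine closure_minimal (convexHull_min ?_ ((convex_polyEval S Q P).add (convex_dualCone C)))
    hclosed
  refine Set.iUnion₂_subset fun i hi => (add_mpow_add_dualCone_subset _ P C i).trans ?_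
  exact Set.add_subset_add_right (subset_polyEval hi Q P)

/-- If all summands of positive degree are empty, adding the cone changes nothing. Otherwise such
a summand absorbs `dualCone C`, so the exposing functional is nonnegative on `dualCone C`; its
bounded sublevel sets then make `polyEval S Q P + dualCone C` closed. -/
lemma mem_polyEval_of_isVertex_add_dualCone {S : Finset ℕ} {Q : ℕ → Set (Euc n)}
    {P C : Set (Euc n)} {w : Euc n} (hw : IsVertex (polyEval S Q (P + dualCone C)) w) :
    w ∈ polyEval S Q P := by
  obtain ⟨hwE', ℓ, hℓ⟩ := hw
  by_cases htriv : ∀ i ∈ S, i ≠ 0 → Q i + mpow (P + dualCone C) i = ∅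
  · have hsame : polyEval S Q (P + dualCone C) = polyEval S Q P := by
      refine congrArg (closure ∘ convexHull ℝ) (Set.iUnion₂_congr fun i hi => ?_)
      rcases eq_or_ne i 0 with rfl | hi0
      · rfl
      rw [htriv i hi hi0, eq_comm, ← Set.subset_empty_iff, ← htriv i hi hi0]
      exact Set.add_subset_add_left (mpow_mono (subset_add_dualCone P C) i)
    rwa [← hsame]
  push Not at htriv
  obtain ⟨_ | k, hi, hi0, x₀, hx₀⟩ := htriv
  · exact absurd rfl hi0
  have hℓD : ∀ d ∈ dualCone C, 0 ≤ ⟪ℓ, d⟫ := fun d hd =>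
    inner_nonneg_of_forall_add_smul_mem (fun t ht => subset_polyEval hi Q _ <| by
      rw [← add_mpow_succ_add_dualCone_absorb]
      exact Set.add_mem_add hx₀ (smul_mem_dualCone hd ht)) fun x hx => (hℓ x hx).1
  have hEE' := polyEval_mono S Q (subset_add_dualCone P C)
  have hclosed : IsClosed (polyEval S Q P + dualCone C) :=
    isClosed_add_of_isBounded_sublevel isClosed_closure (isClosed_dualCone C) hℓD fun c =>
      (isBounded_sublevel_of_uniquelyMinimizes isClosed_closure (convex_polyEval S Q _) hwE' hℓ
        c).subset fun x hx => ⟨hEE' hx.1, hx.2⟩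
  obtain ⟨e, he, d, hd, rfl⟩ := Set.mem_add.1 (polyEval_add_dualCone_subset hclosed hwE')
  have hed : e = e + d := (hℓ e (hEE' he)).2 <| by
    have := (hℓ e (hEE' he)).1
    rw [inner_add_right] at this ⊢
    linarith [hℓD d hd]
  rwa [← hed]

lemma isRoot_add_dualCone {S : Finset ℕ} {Q : ℕ → Set (Euc n)} {P : Set (Euc n)}
    (C : Set (Euc n)) (hroot : IsRoot S Q P) : IsRoot S Q (P + dualCone C) := by
  intro w hw
  have hsub : ∀ i, Q i + mpow P i ⊆ Q i + mpow (P + dualCone C) i := fun i =>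
    Set.add_subset_add_left (mpow_mono (subset_add_dualCone P C) i)
  have hwE : IsVertex (polyEval S Q P) w :=
    hw.of_subset (mem_polyEval_of_isVertex_add_dualCone hw)
      (polyEval_mono S Q (subset_add_dualCone P C))
  obtain ⟨i, hi, j, hj, hij, hvi, hvj⟩ := hroot w hwE
  exact ⟨i, hi, j, hj, hij, hw.of_subset (hsub i hvi.1) (subset_polyEval hi Q _),
    hw.of_subset (hsub j hvj.1) (subset_polyEval hj Q _)⟩

lemma normalCone_locPart {P M : Set (Euc n)} (hP : P.Nonempty) (v γ : Euc n) :
    normalCone (locPart P M v) γ = normalCone P γ ∩ normalCone M v := by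
  rw [locPart, normalCone_add_dualCone hP, dualCone_dualCone_normalCone]

lemma suppFan_locPart {P M : Set (Euc n)} {v γ₀ : Euc n}
    (hint : (interior (normalCone M v)).Nonempty) (hγ₀ : IsVertex P γ₀)
    (hsub : normalCone M v ⊆ normalCone P γ₀) : SuppFan (locPart P M v) = normalCone M v := by
  have hP : P.Nonempty := ⟨γ₀, hγ₀.1⟩
  obtain ⟨ℓ₀, hℓ₀⟩ := hint
  have hγ₀' : IsVertex (locPart P M v) γ₀ := hγ₀.add_dualCone hℓ₀ (hsub (interior_subset hℓ₀))
  refine subset_antisymm (Set.iUnion₂_subset fun β _ => ?_) fun ℓ hℓ => Set.mem_biUnion hγ₀' ?_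
  · rw [normalCone_locPart hP]
    exact Set.inter_subset_right
  · rw [normalCone_locPart hP]
    exact ⟨hsub hℓ, hℓ⟩

lemma eq_of_mem_normalCone_of_mem_interior_normalCone {P K : Set (Euc n)} {β γ ℓ : Euc n}
    (hγ : γ ∈ P) (hβ : β ∈ K) (hℓβ : ℓ ∈ normalCone P β)
    (hℓγ : ℓ ∈ interior (normalCone K γ)) : β = γ := by
  refine sub_eq_zero.1 (eq_zero_of_eventually_inner_nonneg (ℓ := ℓ) ?_ ?_)
  · filter_upwards [mem_interior_iff_mem_nhds.1 hℓγ] with ℓ' hℓ'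
    rw [inner_sub_right, sub_nonneg]
    exact hℓ' β hβ
  · rw [inner_sub_right, sub_nonpos]
    exact hℓβ γ hγ

theorem stmt_13_general {n : ℕ} (ω : Fin n → ℝ)
    (S : Finset ℕ) (Q : ℕ → Set (Euc n))
    (hQ : ∀ i ∈ S, IsRatPolyhedron (Q i) ∧ OmegaPositive ω (Q i))
    (M : Set (Euc n)) (hM : M = ∑ i ∈ S, Q i)
    (Phat : Set (Euc n))
    (hglob : IsGlobalSolution S Q M Phat) :
    (∀ v, IsVertex M v → IsCompleteLocalSolution S Q M v (locPart Phat M v)) ∧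
    (∀ v, IsVertex M v → ∀ γ, IsVertex (locPart Phat M v) γ →
      IsVertex Phat γ ∧
        normalCone (locPart Phat M v) γ = normalCone Phat γ ∩ normalCone M v) ∧
    (∀ v, IsVertex M v → ∀ γ,
      IsVertex (convexHull ℝ
        (⋃ u ∈ {x | IsVertex M x}, {y | IsVertex (locPart Phat M u) y})) γ →
      (interior (normalCone M v ∩
        normalCone (convexHull ℝ
          (⋃ u ∈ {x | IsVertex M x}, {y | IsVertex (locPart Phat M u) y})) γ)).Nonempty →
      IsVertex (locPart Phat M v) γ) := by
  obtain ⟨hroot, hfan⟩ := hglob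
  have hnormal : ∀ v, IsVertex M v → ∀ γ,
      normalCone (locPart Phat M v) γ = normalCone Phat γ ∩ normalCone M v := fun v hv γ => by
    obtain ⟨γ₀, hγ₀, -⟩ := hfan v hv
    exact normalCone_locPart ⟨γ₀, hγ₀.1⟩ v γ
  have hlocal : ∀ v, IsVertex M v → IsCompleteLocalSolution S Q M v (locPart Phat M v) := by
    intro v hv
    obtain ⟨γ₀, hγ₀, hsub⟩ := hfan v hv
    have hint := interior_normalCone_finset_sum_nonempty (fun i hi => (hQ i hi).1) (hM ▸ hv)
    exact ⟨isRoot_add_dualCone _ hroot, suppFan_locPart (hM ▸ hint) hγ₀ hsub⟩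
  refine ⟨hlocal, fun v hv γ hγ => ⟨hγ.of_add_dualCone, hnormal v hv γ⟩, ?_⟩
  intro v hv γ hγ ⟨ℓ, hℓ⟩
  obtain ⟨u, -, hγu⟩ := Set.mem_iUnion₂.1 (extremePoints_convexHull_subset hγ.mem_extremePoints)
  have hℓv : ℓ ∈ SuppFan (locPart Phat M v) := by
    rw [(hlocal v hv).2]
    exact (interior_subset hℓ).1
  obtain ⟨β, hβ, hℓβ⟩ := Set.mem_iUnion₂.1 hℓv
  rw [hnormal v hv] at hℓβ
  have hβγ : β = γ := eq_of_mem_normalCone_of_mem_interior_normalCone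
    (IsVertex.of_add_dualCone hγu).1 (subset_convexHull ℝ _ (Set.mem_iUnion₂.2 ⟨v, hv, hβ⟩))
    hℓβ.1 (interior_mono Set.inter_subset_right hℓ)
  rwa [← hβγ]

/-- global-to-local direction of the local-global principle. -/
theorem stmt_13 {n : ℕ} (ω : Fin n → ℝ) (hω : LinearIndependent ℚ (fun i => ω i))
    (S : Finset ℕ) (Q : ℕ → Set (Euc n))
    (hQ : ∀ i ∈ S, IsRatPolyhedron (Q i) ∧ OmegaPositive ω (Q i))
    (M : Set (Euc n)) (hM : M = ∑ i ∈ S, Q i)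
    (Phat : Set (Euc n)) (hpoly : IsRatPolyhedron Phat) (hpos : OmegaPositive ω Phat)
    (hglob : IsGlobalSolution S Q M Phat) :
    (∀ v, IsVertex M v → IsCompleteLocalSolution S Q M v (locPart Phat M v)) ∧
    (∀ v, IsVertex M v → ∀ γ, IsVertex (locPart Phat M v) γ →
      IsVertex Phat γ ∧
        normalCone (locPart Phat M v) γ = normalCone Phat γ ∩ normalCone M v) ∧
    (∀ v, IsVertex M v → ∀ γ,
      IsVertex (convexHull ℝ
        (⋃ u ∈ {x | IsVertex M x}, {y | IsVertex (locPart Phat M u) y})) γ →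
      (interior (normalCone M v ∩
        normalCone (convexHull ℝ
          (⋃ u ∈ {x | IsVertex M x}, {y | IsVertex (locPart Phat M u) y})) γ)).Nonempty →
      IsVertex (locPart Phat M v) γ) :=
  stmt_13_general ω S Q hQ M hM Phat hglob
end
end
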